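/- arXiv:1709.01885 — 4 statements merged into one kernel-verified Lean document; each statement's English description precedes it below -/
import Mathlib

section
/- Let S = {f : ℕ → Circle | ∀ i, (f(i+1))^2 = f(i)} be the dyadic solenoid, and for each i let Π_i : [1,2] × S → [1,2] × Circle denote the map Π_i(r, f) = (r, f(i)). If M ⊆ [1,2] × S is a compact connected set whose projections onto [1,2] and onto S are both surjective, then for every i the set M_i = Π_i(M) is essential in the annulus [1,2] × Circle, i.e. the boundary circles {1} × Circle and {2} × Circle lie in distinct connected components of ([1,2] × Circle) \ M_i. -/
/-!
Suppose a point `p` of the inner and a point `q` of the outer boundary circle lie in one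
component of the complement of `C = Π_i(M)`. A chain of short steps from `p` to `q` that keep far
from `C` lifts to a polygonal line in the universal cover `ℂ → ℝ × Circle` of the annulus (angle
as real part, radius as imaginary part). Continued by vertical rays, this line avoids every
`2π`-translate of the lift of `C`, and a winding-number argument bounds the horizontal width of
all connected subsets of that lift by some `W`.

The map `z ↦ z ^ 2 ^ k` sends `Π_{i+k}(M)` onto `Π_i(M)` and lifts to multiplication of angles by
`2 ^ k`, so the connected subsets of the lift of `Π_{i+k}(M)` have width at most `W / 2 ^ k < 1`.
A compact, relatively clopen piece of that lift then maps onto the continuum `Π_{i+k}(M)`, which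
therefore misses an angle. But `Π_{i+k}(M)` meets every angle because `M` projects onto the
solenoid.
-/

/-- A compact connected subset `C` of the annulus `[1,2] × Circle` is *essential*
if the two boundary circles `{1} × Circle` and `{2} × Circle` lie in distinct
connected components of the complement of `C`: no connected component of the
complement contains points of both boundary circles. -/
def EssentialInAnnulus (C : Set ((Set.Icc (1:ℝ) 2) × Circle)) : Prop :=
  ∀ p q : (Set.Icc (1:ℝ) 2) × Circle, (p.1 : ℝ) = 1 → (q.1 : ℝ) = 2 →
    p ∉ C → q ∉ C → connectedComponentIn Cᶜ p ≠ connectedComponentIn Cᶜ q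

open Complex Set Metric Real

namespace Complex

lemma arg_div_eq_sub_of_re_nonneg {a b : ℂ} (ha : a ≠ 0) (hb : b ≠ 0) (ha' : 0 ≤ a.re)
    (hb' : 0 ≤ b.re) (h : 0 < a.re ∨ 0 < b.re) : arg (b / a) = arg b - arg a := by
  have hA := abs_le.mp (abs_arg_le_pi_div_two_iff.mpr ha')
  have hB := abs_le.mp (abs_arg_le_pi_div_two_iff.mpr hb')
  have hstrict : |arg a| < π / 2 ∨ |arg b| < π / 2 :=
    h.imp (fun h ↦ abs_arg_lt_pi_div_two_iff.mpr (.inl h))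
      (fun h ↦ abs_arg_lt_pi_div_two_iff.mpr (.inl h))
  have hmem : arg b - arg a ∈ Ioc (-π) π := by
    constructor
    · rcases hstrict with h | h <;> linarith [(abs_lt.mp h).1, (abs_lt.mp h).2]
    · linarith
  rw [← arg_coe_angle_toReal_eq_arg, arg_div_coe_angle hb ha, ← Real.Angle.coe_sub,
    Real.Angle.toReal_coe_eq_self_iff_mem_Ioc.mpr hmem]

lemma coe_sum_range_arg_div (u : ℕ → ℂ) {m : ℕ} (hu : ∀ k ≤ m, u k ≠ 0) :
    ((∑ k ∈ Finset.range m, arg (u (k + 1) / u k) : ℝ) : Real.Angle)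
      = arg (u m) - arg (u 0) := by
  rw [← Real.Angle.coe_coeHom, map_sum, Real.Angle.coe_coeHom,
    Finset.sum_congr rfl fun k hk ↦ arg_div_coe_angle (hu (k + 1) (Finset.mem_range.mp hk))
      (hu k (Finset.mem_range.mp hk).le)]
  exact Finset.sum_range_sub (fun k ↦ (arg (u k) : Real.Angle)) m

lemma sum_range_arg_div_of_re_nonneg (u : ℕ → ℂ) {m : ℕ} (hu : ∀ k ≤ m, u k ≠ 0)
    (hre : ∀ k ≤ m, 0 ≤ (u k).re) (hpos : ∀ k < m, 0 < (u k).re ∨ 0 < (u (k + 1)).re) :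
    ∑ k ∈ Finset.range m, arg (u (k + 1) / u k) = arg (u m) - arg (u 0) := by
  rw [Finset.sum_congr rfl fun k hk ↦ by
    have hk : k < m := Finset.mem_range.mp hk
    exact arg_div_eq_sub_of_re_nonneg (hu k hk.le) (hu (k + 1) hk) (hre k hk.le)
      (hre (k + 1) hk) (hpos k hk)]
  exact Finset.sum_range_sub (fun k ↦ arg (u k)) m

lemma div_mem_slitPlane {w d : ℂ} (hd : d ≠ 0) (h : ∀ t : ℝ, 0 ≤ t → w ≠ -(t * d)) :
    w / d ∈ slitPlane := by
  rw [mem_slitPlane_iff_not_le_zero]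
  intro hle
  obtain ⟨hre, him⟩ := le_def.mp hle
  apply h (-(w / d).re) (by simpa using hre)
  have : w / d = ((w / d).re : ℂ) := ext rfl (by simpa using him)
  rw [ofReal_neg, neg_mul, neg_neg, ← this, div_mul_cancel₀ _ hd]

lemma sub_div_sub_mem_slitPlane {a b v : ℂ} (hv : v ∉ segment ℝ a b) :
    (b - v) / (a - v) ∈ slitPlane := by
  refine div_mem_slitPlane (sub_ne_zero.mpr fun h ↦ hv (h ▸ left_mem_segment ℝ a b))
    fun t ht heq ↦ hv ⟨t / (1 + t), 1 / (1 + t), by positivity, by positivity, by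
      field_simp; ring, ?_⟩
  have : (1 + t : ℂ) ≠ 0 := by exact_mod_cast (by positivity : (1 + t : ℝ) ≠ 0)
  simp only [real_smul]
  push_cast
  field_simp
  linear_combination heq

lemma sub_div_neg_I_mem_slitPlane {a v : ℂ} (hv : ∀ t : ℝ, 0 ≤ t → v ≠ a - t * I) :
    (a - v) / -I ∈ slitPlane :=
  div_mem_slitPlane (neg_ne_zero.mpr I_ne_zero) fun t ht heq ↦
    hv t ht (by linear_combination -heq)

lemma I_div_sub_mem_slitPlane {b v : ℂ} (hv : ∀ t : ℝ, 0 ≤ t → v ≠ b + t * I) :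
    I / (b - v) ∈ slitPlane := by
  refine div_mem_slitPlane (sub_ne_zero.mpr fun h ↦ hv 0 le_rfl (by simp [h]))
    fun t ht heq ↦ ?_
  have ht0 : (t : ℂ) ≠ 0 := by rintro h; simp [h] at heq
  exact hv t⁻¹ (inv_nonneg.mpr ht) (by push_cast; field_simp; linear_combination -heq)

end Complex

/-- The sum of the increments of `arg` along `u v 0, …, u v m` is continuous on `Z` and equals
`arg I - arg (-I) = π` modulo `2π`; at `x` and at `y` the increments add up exactly, to `π` and
to `-π`, so by the intermediate value theorem it would vanish somewhere on a preconnected `Z`. -/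
theorem not_isPreconnected_of_arg_winding {T : Type*} [TopologicalSpace T] {Z : Set T}
    (u : T → ℕ → ℂ) (m : ℕ) (hcont : ∀ k, Continuous fun v ↦ u v k)
    (hslit : ∀ v ∈ Z, ∀ k < m, u v (k + 1) / u v k ∈ slitPlane)
    (hfirst : ∀ v, u v 0 = -I) (hlast : ∀ v, u v m = I) {x y : T} (hx : x ∈ Z) (hy : y ∈ Z)
    (hxre : ∀ k ≤ m, 0 ≤ (u x k).re) (hxpos : ∀ k < m, 0 < (u x k).re ∨ 0 < (u x (k + 1)).re)
    (hyre : ∀ k ≤ m, (u y k).re ≤ 0) (hypos : ∀ k < m, (u y k).re < 0 ∨ (u y (k + 1)).re < 0) :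
    ¬ IsPreconnected Z := by
  intro hZ
  have hne : ∀ v ∈ Z, ∀ k ≤ m, u v k ≠ 0 := by
    intro v hv k hk
    rcases hk.lt_or_eq with hk | rfl
    · exact (div_ne_zero_iff.mp (slitPlane_ne_zero (hslit v hv k hk))).2
    · rw [hlast]; exact I_ne_zero
  set f : T → ℝ := fun v ↦ ∑ k ∈ Finset.range m, arg (u v (k + 1) / u v k)
  have hf : ContinuousOn f Z := by
    refine continuousOn_finsetSum _ fun k hk v hv ↦ ?_
    have hk := Finset.mem_range.mp hk
    exact ((continuousAt_arg (hslit v hv k hk)).comp (f := fun v ↦ u v (k + 1) / u v k)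
      (((hcont (k + 1)).continuousAt).div (hcont k).continuousAt (hne v hv k hk.le)))
      |>.continuousWithinAt
  have hfx : f x = π := by
    simp only [f]
    rw [sum_range_arg_div_of_re_nonneg _ (hne x hx) hxre hxpos, hfirst, hlast, arg_I, arg_neg_I]
    ring
  have hfy : f y = -π := by
    have := sum_range_arg_div_of_re_nonneg (fun k ↦ -u y k)
      (fun k hk ↦ neg_ne_zero.mpr (hne y hy k hk)) (fun k hk ↦ by simpa using hyre k hk)
      (fun k hk ↦ by simpa using hypos k hk)
    simp only [neg_div_neg_eq, hfirst, hlast, neg_neg, arg_I, arg_neg_I] at this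
    simp only [f, this]
    ring
  obtain ⟨v, hv, hv0⟩ : (0 : ℝ) ∈ f '' Z :=
    hZ.intermediate_value hy hx hf ⟨by linarith [pi_pos], by linarith [pi_pos]⟩
  have hangle := coe_sum_range_arg_div (u v) (hne v hv)
  rw [show (∑ k ∈ Finset.range m, arg (u v (k + 1) / u v k)) = 0 from hv0, hfirst, hlast,
    arg_I, arg_neg_I, ← Real.Angle.coe_sub, Real.Angle.coe_zero] at hangle
  exact Real.Angle.pi_ne_zero (by rw [hangle]; congr 1; ring)

theorem not_isPreconnected_of_polyline (ζ : ℕ → ℂ) (N : ℕ) {Z : Set ℂ}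
    (hseg : ∀ j < N, ∀ s ∈ segment ℝ (ζ j) (ζ (j + 1)), s ∉ Z)
    (hdown : ∀ t : ℝ, 0 ≤ t → ζ 0 - t * I ∉ Z) (hup : ∀ t : ℝ, 0 ≤ t → ζ N + t * I ∉ Z)
    {x y : ℂ} (hx : x ∈ Z) (hy : y ∈ Z) (hxζ : ∀ j ≤ N, x.re < (ζ j).re)
    (hyζ : ∀ j ≤ N, (ζ j).re < y.re) : ¬ IsPreconnected Z := by
  -- the rays count as segments to vertices at infinity in the directions `-I` and `I`
  let u : ℂ → ℕ → ℂ := fun v k ↦ if k = 0 then -I else if k ≤ N + 1 then ζ (k - 1) - v else I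
  have hmid : ∀ v j, j ≤ N → u v (j + 1) = ζ j - v := fun v j hj ↦ by
    simp [u, show j + 1 ≤ N + 1 by omega]
  have hlast : ∀ v, u v (N + 2) = I := fun v ↦ by simp [u]
  have hu : ∀ v k, k ≤ N + 2 → u v k = -I ∨ (∃ j ≤ N, u v k = ζ j - v) ∨ u v k = I := by
    intro v k hk
    rcases k with _ | j
    · simp [u]
    · rcases (show j ≤ N ∨ j = N + 1 by omega) with hj | rfl
      · exact .inr (.inl ⟨j, hj, hmid v j hj⟩)
      · exact .inr (.inr (hlast v))
  refine not_isPreconnected_of_arg_winding u (N + 2)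
    (fun k ↦ by dsimp only [u]; split_ifs <;> fun_prop)
    (fun v hv k hk ↦ ?_) (fun v ↦ by simp [u]) hlast hx hy ?_ ?_ ?_ ?_
  · rcases k with _ | j
    · rw [hmid v 0 (Nat.zero_le N)]
      exact sub_div_neg_I_mem_slitPlane fun t ht h ↦ hdown t ht (h ▸ hv)
    · rcases (show j < N ∨ j = N by omega) with hj | rfl
      · rw [hmid v j hj.le, hmid v (j + 1) hj]
        exact sub_div_sub_mem_slitPlane fun h ↦ hseg j hj v h hv
      · rw [hmid v j le_rfl, hlast]
        exact I_div_sub_mem_slitPlane fun t ht h ↦ hup t ht (h ▸ hv)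
  · intro k hk
    rcases hu x k hk with h | ⟨j, hj, h⟩ | h
    · simp [h]
    · simp [h, (hxζ j hj).le]
    · simp [h]
  · rintro (_ | j) hj
    · simpa [hmid x 0 (Nat.zero_le N)] using .inr (hxζ 0 (Nat.zero_le N))
    · simpa [hmid x j (by omega)] using .inl (hxζ j (by omega))
  · intro k hk
    rcases hu y k hk with h | ⟨j, hj, h⟩ | h
    · simp [h]
    · simp [h, (hyζ j hj).le]
    · simp [h]
  · rintro (_ | j) hj
    · simpa [hmid y 0 (Nat.zero_le N)] using .inr (hyζ 0 (Nat.zero_le N))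
    · simpa [hmid y j (by omega)] using .inl (hyζ j (by omega))

lemma Relation.ReflTransGen.exists_seq {α : Type*} {r : α → α → Prop} {a b : α}
    (h : Relation.ReflTransGen r a b) :
    ∃ (n : ℕ) (x : ℕ → α), x 0 = a ∧ x n = b ∧ ∀ j < n, r (x j) (x (j + 1)) := by
  induction h using Relation.ReflTransGen.head_induction_on with
  | refl => exact ⟨0, fun _ ↦ b, rfl, rfl, by simp⟩
  | head hac _ ih =>
    obtain ⟨n, x, hx0, hxn, hx⟩ := ih
    refine ⟨n + 1, fun | 0 => _ | j + 1 => x j, rfl, hxn, ?_⟩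
    rintro (_ | j) hj
    · exact (show r _ (x 0) from hx0 ▸ hac)
    · exact hx j (by omega)

theorem exists_seq_closedBall_subset_of_mem_connectedComponentIn {X : Type*}
    [PseudoMetricSpace X] {U : Set X} (hU : IsOpen U) {p q : X}
    (hq : q ∈ connectedComponentIn U p) (K : ℝ) :
    ∃ (n : ℕ) (x : ℕ → X), x 0 = p ∧ x n = q ∧
      ∀ j < n, closedBall (x j) (K * dist (x j) (x (j + 1))) ⊆ U := by
  let step : X → X → Prop := fun a b ↦
    closedBall a (K * dist a b) ⊆ U ∧ closedBall b (K * dist a b) ⊆ U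
  have hp : p ∈ U := connectedComponentIn_nonempty_iff.mp ⟨q, hq⟩
  have hlocal : ∀ a ∈ U, ∀ᶠ b in nhds a, step a b := by
    intro a ha
    obtain ⟨r, hr, hball⟩ := Metric.isOpen_iff.mp hU a ha
    filter_upwards [ball_mem_nhds a (by positivity : 0 < r / (|K| + 1))] with b hb
    rw [mem_ball, lt_div_iff₀ (by positivity)] at hb
    have hK : K * dist a b ≤ |K| * dist b a := by
      rw [dist_comm]; exact mul_le_mul_of_nonneg_right (le_abs_self K) dist_nonneg
    refine ⟨fun z hz ↦ hball ?_, fun z hz ↦ hball ?_⟩ <;> rw [mem_closedBall] at hz <;>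
      rw [mem_ball]
    · nlinarith [dist_nonneg (x := b) (y := a)]
    · nlinarith [dist_triangle z b a, dist_comm z a, dist_nonneg (x := b) (y := a)]
  have hchain : Relation.ReflTransGen step p q := by
    refine isPreconnected_connectedComponentIn.induction₂ (Relation.ReflTransGen step)
      (fun a ha ↦ ?_) (fun _ _ _ _ _ _ ↦ Relation.ReflTransGen.trans)
      (fun _ _ _ _ h ↦ ?_) (mem_connectedComponentIn hp) hq
    · exact eventually_nhdsWithin_of_eventually_nhds
        ((hlocal a (connectedComponentIn_subset U p ha)).mono fun _ ↦ .single)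
    · have : Std.Symm step := ⟨fun a b hab ↦ by
        simpa only [step, dist_comm, and_comm] using hab⟩
      exact Std.Symm.symm _ _ h
  obtain ⟨n, x, hx0, hxn, hx⟩ := hchain.exists_seq
  exact ⟨n, x, hx0, hxn, fun j hj ↦ (hx j hj).1⟩

lemma Circle.dist_exp_exp_le (a b : ℝ) : dist (Circle.exp a) (Circle.exp b) ≤ dist a b := by
  have : (Circle.exp a : ℂ) - Circle.exp b = (cexp (I * (a - b : ℝ)) - 1) * Circle.exp b := by
    rw [Circle.coe_exp, Circle.coe_exp, sub_mul, ← Complex.exp_add]; push_cast; ring_nf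
  change dist (Circle.exp a : ℂ) (Circle.exp b) ≤ _
  rw [dist_eq_norm, this, norm_mul, Circle.norm_coe, mul_one, Real.dist_eq]
  exact Real.norm_exp_I_mul_ofReal_sub_one_le

lemma Circle.abs_arg_div_le_two_mul_dist (z w : Circle) :
    |arg ((w / z : Circle) : ℂ)| ≤ 2 * dist w z := by
  set θ := arg ((w / z : Circle) : ℂ)
  have hdist : dist w z = 2 * |Real.sin (θ / 2)| := by
    change dist (w : ℂ) z = _
    rw [dist_eq_norm, show (w : ℂ) - z = ((w / z : Circle) - 1) * z by
      rw [Circle.coe_div, sub_mul, div_mul_cancel₀ _ (Circle.coe_ne_zero z), one_mul],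
      norm_mul, Circle.norm_coe, mul_one, ← Circle.exp_arg (w / z), Circle.coe_exp, mul_comm,
      norm_exp_I_mul_ofReal_sub_one, norm_mul, Real.norm_eq_abs, Real.norm_eq_abs, abs_two]
  have hθ : |θ / 2| ≤ π / 2 := by
    rw [abs_div, abs_two]; linarith [abs_arg_le_pi ((w / z : Circle) : ℂ)]
  have hjordan := Real.mul_abs_le_abs_sin hθ
  rw [abs_div, abs_two] at hjordan
  rw [hdist]
  have h4 : 2 / π * (|θ| / 2) * π = |θ| := by field_simp
  nlinarith [pi_le_four, pi_pos, abs_nonneg θ]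

noncomputable def annulusCover (v : ℂ) : ℝ × Circle := (v.im, Circle.exp v.re)

namespace annulusCover

@[fun_prop]
lemma continuous : Continuous annulusCover := by unfold annulusCover; fun_prop

lemma add_ofReal_mul_I (v : ℂ) (t : ℝ) :
    annulusCover (v + t * I) = (v.im + t, Circle.exp v.re) := by
  simp [annulusCover]

lemma add_int_mul_two_pi (v : ℂ) (n : ℤ) :
    annulusCover (v + (n * (2 * π) : ℝ)) = annulusCover v := by
  simp [annulusCover, Circle.exp_add]

lemma dist_le (v w : ℂ) : dist (annulusCover v) (annulusCover w) ≤ dist v w := by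
  simp only [annulusCover, Prod.dist_eq, dist_eq_norm]
  refine max_le ?_ ((Circle.dist_exp_exp_le _ _).trans ?_)
  · rw [← sub_im]; exact abs_im_le_norm _
  · rw [Real.dist_eq, ← sub_re]; exact abs_re_le_norm _

lemma isOpenMap : IsOpenMap annulusCover :=
  ((IsOpenMap.id.prodMap isLocalHomeomorph_circleExp.isOpenMap).comp
    (Homeomorph.prodComm ℝ ℝ).isOpenMap).comp equivRealProdCLM.toHomeomorph.isOpenMap

lemma exists_eq_of_dist (v : ℂ) (b : ℝ × Circle) :
    ∃ w, annulusCover w = b ∧ dist w v ≤ 3 * dist (annulusCover v) b := by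
  set θ := arg ((b.2 / Circle.exp v.re : Circle) : ℂ)
  refine ⟨v + θ + (b.1 - v.im : ℝ) * I, ?_, ?_⟩
  · rw [add_ofReal_mul_I]
    ext
    · simp
    · simp only [add_re, ofReal_re, Circle.exp_add, θ, Circle.exp_arg, mul_div_cancel]
  · rw [dist_eq_norm,
      show v + θ + (b.1 - v.im : ℝ) * I - v = θ + (b.1 - v.im : ℝ) * I by ring]
    have hθ := Circle.abs_arg_div_le_two_mul_dist (Circle.exp v.re) b.2
    have h1 : |b.1 - v.im| ≤ dist (annulusCover v) b :=
      (abs_sub_comm v.im b.1 ▸ (le_max_left _ _ : dist v.im b.1 ≤ _))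
    have h2 : dist b.2 (Circle.exp v.re) ≤ dist (annulusCover v) b :=
      dist_comm (Circle.exp v.re) b.2 ▸ (le_max_right _ _ : dist (Circle.exp v.re) b.2 ≤ _)
    calc ‖(θ : ℂ) + (b.1 - v.im : ℝ) * I‖ ≤ |θ| + |b.1 - v.im| := by
          refine (norm_add_le _ _).trans ?_
          rw [norm_mul, norm_I, mul_one, norm_real, norm_real, Real.norm_eq_abs,
            Real.norm_eq_abs]
      _ ≤ 3 * dist (annulusCover v) b := by linarith

lemma surjective : Function.Surjective annulusCover :=
  fun b ↦ (exists_eq_of_dist 0 b).imp fun _ h ↦ h.1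

lemma exists_lift_seq (y : ℕ → ℝ × Circle) :
    ∃ ζ : ℕ → ℂ, (∀ j, annulusCover (ζ j) = y j) ∧
      ∀ j, dist (ζ (j + 1)) (ζ j) ≤ 3 * dist (y j) (y (j + 1)) := by
  choose lift hlift using exists_eq_of_dist
  let ζ : ℕ → ℂ := fun j ↦ Nat.rec (lift 0 (y 0)) (fun j v ↦ lift v (y (j + 1))) j
  have hζ : ∀ j, annulusCover (ζ j) = y j := by
    rintro (_ | j)
    exacts [(hlift _ _).1, (hlift _ _).1]
  exact ⟨ζ, hζ, fun j ↦ hζ j ▸ (hlift (ζ j) (y (j + 1))).2⟩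

lemma add_mul_I_notMem_image {C : Set (Icc (1 : ℝ) 2 × Circle)}
    {p : Icc (1 : ℝ) 2 × Circle} (hpC : p ∉ C) {w : ℂ}
    (hw : annulusCover w = Prod.map (↑) id p) {t : ℝ} (ht : t = 0 ∨ (p.1 : ℝ) + t ∉ Icc 1 2) :
    annulusCover (w + t * I) ∉ Prod.map (↑) id '' C := by
  rintro ⟨c, hc, hcw⟩
  rw [add_ofReal_mul_I] at hcw
  obtain ⟨hw1, hw2⟩ := Prod.ext_iff.mp hw
  obtain ⟨hc1, hc2⟩ := Prod.ext_iff.mp hcw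
  simp only [annulusCover, Prod.map_fst, Prod.map_snd, id] at hw1 hw2 hc1 hc2
  rcases ht with rfl | ht
  · exact hpC (Prod.ext (Subtype.ext (by rw [hc1, hw1, add_zero])) (hc2.trans hw2) ▸ hc)
  · exact ht (hw1 ▸ hc1 ▸ c.1.2)

end annulusCover

/-- Lift to the universal cover a chain of short steps from `p` to `q` that keep far from `C`. -/
theorem exists_polyline_of_connectedComponentIn_eq {C : Set (Icc (1 : ℝ) 2 × Circle)}
    (hC : IsClosed C) {p q : Icc (1 : ℝ) 2 × Circle} (hp : (p.1 : ℝ) = 1) (hq : (q.1 : ℝ) = 2)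
    (hpC : p ∉ C) (hqC : q ∉ C) (hpq : connectedComponentIn Cᶜ p = connectedComponentIn Cᶜ q) :
    ∃ (N : ℕ) (ζ : ℕ → ℂ),
      (∀ j < N, ∀ s ∈ segment ℝ (ζ j) (ζ (j + 1)), annulusCover s ∉ Prod.map (↑) id '' C) ∧
      (∀ t : ℝ, 0 ≤ t → annulusCover (ζ 0 - t * I) ∉ Prod.map (↑) id '' C) ∧
      (∀ t : ℝ, 0 ≤ t → annulusCover (ζ N + t * I) ∉ Prod.map (↑) id '' C) := by
  set e : Icc (1 : ℝ) 2 × Circle → ℝ × Circle := Prod.map (↑) id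
  have he : Isometry e := isometry_subtype_coe.prodMap isometry_id
  obtain ⟨N, x, hx0, hxN, hx⟩ := exists_seq_closedBall_subset_of_mem_connectedComponentIn
    hC.isOpen_compl (by rw [hpq]; exact mem_connectedComponentIn hqC) 3
  obtain ⟨ζ, hζ, hζdist⟩ := annulusCover.exists_lift_seq (e ∘ x)
  refine ⟨N, ζ, ?_, fun t ht ↦ ?_, fun t ht ↦ ?_⟩
  · rintro j hj s hs ⟨c, hc, hcs⟩
    refine hx j hj (mem_closedBall.mpr ?_) hc
    calc dist c (x j) = dist (annulusCover s) (annulusCover (ζ j)) := by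
          rw [← he.dist_eq, hcs, hζ, Function.comp_apply]
      _ ≤ dist s (ζ j) := annulusCover.dist_le _ _
      _ ≤ dist (ζ (j + 1)) (ζ j) := by
          rw [dist_comm s, dist_comm _ (ζ j), ← dist_add_dist_of_mem_segment hs]
          exact le_add_of_nonneg_right dist_nonneg
      _ ≤ 3 * dist (x j) (x (j + 1)) := by
          simpa only [Function.comp_apply, he.dist_eq] using hζdist j
  · rw [show ζ 0 - t * I = ζ 0 + (-t : ℝ) * I by push_cast; ring]
    refine annulusCover.add_mul_I_notMem_image hpC (hx0 ▸ hζ 0) ?_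
    rcases ht.eq_or_lt with rfl | ht
    · exact .inl neg_zero
    · exact .inr fun h ↦ by linarith [h.1]
  · refine annulusCover.add_mul_I_notMem_image hqC (hxN ▸ hζ N) ?_
    rcases ht.eq_or_lt with rfl | ht
    · exact .inl rfl
    · exact .inr fun h ↦ by linarith [h.2]

def ConnectedWidthLE (Y : Set ℂ) (W : ℝ) : Prop :=
  ∀ Z ⊆ Y, IsPreconnected Z → ∀ u ∈ Z, ∀ v ∈ Z, v.re - u.re ≤ W

lemma ConnectedWidthLE.mono {Y : Set ℂ} {W W' : ℝ} (h : ConnectedWidthLE Y W) (hW : W ≤ W') :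
    ConnectedWidthLE Y W' :=
  fun Z hZY hZ u hu v hv ↦ (h Z hZY hZ u hu v hv).trans hW

lemma ConnectedWidthLE.of_mapsTo {Y Y' : Set ℂ} {W c : ℝ} (h : ConnectedWidthLE Y W)
    (hc : 0 < c) {g : ℂ → ℂ} (hg : Continuous g) (hre : ∀ v, (g v).re = c * v.re)
    (hmaps : MapsTo g Y' Y) : ConnectedWidthLE Y' (W / c) := by
  intro Z hZY hZ u hu v hv
  have := h (g '' Z) (image_subset_iff.mpr (hZY.trans hmaps)) (hZ.image g hg.continuousOn)
    (g u) (mem_image_of_mem g hu) (g v) (mem_image_of_mem g hv)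
  rw [hre, hre] at this
  rw [le_div_iff₀ hc]
  linarith

/-- A wider connected piece could be translated by a multiple of `2π` so as to straddle the
polygonal line. -/
theorem exists_connectedWidthLE_of_polyline {C : Set (ℝ × Circle)} (ζ : ℕ → ℂ) (N : ℕ)
    (hseg : ∀ j < N, ∀ s ∈ segment ℝ (ζ j) (ζ (j + 1)), annulusCover s ∉ C)
    (hdown : ∀ t : ℝ, 0 ≤ t → annulusCover (ζ 0 - t * I) ∉ C)
    (hup : ∀ t : ℝ, 0 ≤ t → annulusCover (ζ N + t * I) ∉ C) :
    ∃ W, ConnectedWidthLE (annulusCover ⁻¹' C) W := by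
  obtain ⟨lo, hlo⟩ := ((finite_Iic N).image fun j ↦ (ζ j).re).bddBelow
  obtain ⟨hi, hhi⟩ := ((finite_Iic N).image fun j ↦ (ζ j).re).bddAbove
  refine ⟨hi - lo + 2 * π, fun Z hZC hZ u hu v hv ↦ ?_⟩
  by_contra! hwide
  obtain ⟨n, ⟨hn₁, hn₂⟩, -⟩ := existsUnique_sub_zsmul_mem_Ioc two_pi_pos lo u.re
  rw [zsmul_eq_mul] at hn₁ hn₂
  let shift : ℂ → ℂ := fun w ↦ w + (n * (2 * π) : ℝ)
  have hshift : ∀ s ∈ shift '' Z, annulusCover s ∈ C := by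
    rintro _ ⟨w, hw, rfl⟩
    rw [annulusCover.add_int_mul_two_pi]
    exact hZC hw
  refine not_isPreconnected_of_polyline ζ N (fun j hj s hs h ↦ hseg j hj s hs (hshift s h))
    (fun t ht h ↦ hdown t ht (hshift _ h)) (fun t ht h ↦ hup t ht (hshift _ h))
    (mem_image_of_mem shift hu) (mem_image_of_mem shift hv) (fun j hj ↦ ?_) (fun j hj ↦ ?_)
    (hZ.image shift (by fun_prop))
  · have := hlo (mem_image_of_mem _ (mem_Iic.mpr hj))
    simp only [shift, add_re, ofReal_re]
    linarith
  · have := hhi (mem_image_of_mem _ (mem_Iic.mpr hj))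
    simp only [shift, add_re, ofReal_re]
    linarith

theorem exists_isClopen_disjoint_of_disjoint_connectedComponent {X : Type*}
    [TopologicalSpace X] [T2Space X] [CompactSpace X] {x : X} {R : Set X} (hR : IsClosed R)
    (h : Disjoint (connectedComponent x) R) : ∃ U, IsClopen U ∧ x ∈ U ∧ Disjoint U R := by
  rw [connectedComponent_eq_iInter_isClopen] at h
  obtain ⟨s, hs⟩ := hR.isCompact.elim_finite_subfamily_closed
    (fun U : {U : Set X // IsClopen U ∧ x ∈ U} ↦ (U : Set X)) (fun U ↦ U.2.1.isClosed)
    (disjoint_iff_inter_eq_empty.mp h.symm)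
  exact ⟨⋂ U ∈ s, (U : Set X), isClopen_biInter_finset fun U _ ↦ U.2.1,
    mem_iInter₂.mpr fun U _ ↦ U.2.2, disjoint_iff_inter_eq_empty.mpr (by rwa [inter_comm])⟩

lemma isCompact_preimage_annulusCover_inter {X : Set (ℝ × Circle)} (hX : IsCompact X)
    (c r : ℝ) : IsCompact (annulusCover ⁻¹' X ∩ {v | |v.re - c| ≤ r}) := by
  refine (((isCompact_Icc (a := c - r) (b := c + r)).prod (hX.image continuous_fst)).image
    equivRealProdCLM.symm.continuous).of_isClosed_subset
    ((hX.isClosed.preimage annulusCover.continuous).inter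
      (isClosed_le (by fun_prop) (by fun_prop)))
    fun v ⟨hvX, (hv : |v.re - c| ≤ r)⟩ ↦
      ⟨(v.re, v.im), ⟨?_, annulusCover v, hvX, rfl⟩, equivRealProdCLM.symm_apply_apply v⟩
  obtain ⟨h1, h2⟩ := abs_sub_le_iff.mp hv
  exact ⟨by linarith, by linarith⟩

theorem exists_isCompact_lift_piece {X : Set (ℝ × Circle)} (hX : IsCompact X)
    (hw : ConnectedWidthLE (annulusCover ⁻¹' X) 1) {ζ : ℂ} (hζ : annulusCover ζ ∈ X) :
    ∃ U ⊆ annulusCover ⁻¹' X, ζ ∈ U ∧ IsCompact U ∧ (∀ v ∈ U, |v.re - ζ.re| < 2) ∧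
      ∃ V, IsOpen V ∧ annulusCover '' U = V ∩ X := by
  set K := annulusCover ⁻¹' X ∩ {v | |v.re - ζ.re| ≤ 2}
  have : CompactSpace K :=
    isCompact_iff_compactSpace.mp (isCompact_preimage_annulusCover_inter hX _ _)
  have hζK : ζ ∈ K := ⟨hζ, by simp⟩
  let R : Set K := {v | |(v : ℂ).re - ζ.re| = 2}
  have hdisj : Disjoint (connectedComponent (⟨ζ, hζK⟩ : K)) R := by
    refine disjoint_left.mpr fun v hv (hvR : _ = _) ↦ ?_
    have hpre := (isPreconnected_connectedComponent (x := (⟨ζ, hζK⟩ : K))).image _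
      continuous_subtype_val.continuousOn
    have hsub : Subtype.val '' connectedComponent (⟨ζ, hζK⟩ : K) ⊆ annulusCover ⁻¹' X :=
      (image_subset_range _ _).trans (by rw [Subtype.range_coe]; exact inter_subset_left)
    have h₁ := hw _ hsub hpre ζ ⟨_, mem_connectedComponent, rfl⟩ v ⟨v, hv, rfl⟩
    have h₂ := hw _ hsub hpre v ⟨v, hv, rfl⟩ ζ ⟨_, mem_connectedComponent, rfl⟩
    have : |(v : ℂ).re - ζ.re| ≤ 1 := abs_sub_le_iff.mpr ⟨h₁, h₂⟩
    linarith
  obtain ⟨U, hU, hζU, hUR⟩ := exists_isClopen_disjoint_of_disjoint_connectedComponent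
    (isClosed_eq (by fun_prop) continuous_const) hdisj
  obtain ⟨V, hV, rfl⟩ := isOpen_induced_iff.mp hU.isOpen
  have hlt : ∀ v : K, v ∈ Subtype.val ⁻¹' V → |(v : ℂ).re - ζ.re| < 2 := fun v hv ↦
    v.2.2.lt_of_ne fun h ↦ disjoint_left.mp hUR hv h
  refine ⟨Subtype.val '' (Subtype.val ⁻¹' V), ?_, ⟨_, hζU, rfl⟩,
    hU.isClosed.isCompact.image continuous_subtype_val, ?_,
    annulusCover '' (V ∩ {v | |v.re - ζ.re| < 2}),
    annulusCover.isOpenMap _ (hV.inter (isOpen_lt (by fun_prop) continuous_const)), ?_⟩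
  · rintro _ ⟨v, -, rfl⟩; exact v.2.1
  · rintro _ ⟨v, hv, rfl⟩; exact hlt v hv
  · ext x
    constructor
    · rintro ⟨_, ⟨v, hv, rfl⟩, rfl⟩
      exact ⟨⟨v, ⟨hv, hlt v hv⟩, rfl⟩, v.2.1⟩
    · rintro ⟨⟨v, ⟨hvV, hv : |v.re - ζ.re| < 2⟩, rfl⟩, hx⟩
      exact ⟨v, ⟨⟨v, hx, hv.le⟩, hvV, rfl⟩, rfl⟩

theorem snd_image_ne_univ_of_connectedWidthLE {X : Set (ℝ × Circle)} (hX : IsCompact X)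
    (hXc : IsConnected X) (hw : ConnectedWidthLE (annulusCover ⁻¹' X) 1) :
    Prod.snd '' X ≠ univ := by
  obtain ⟨x₀, hx₀⟩ := hXc.nonempty
  obtain ⟨ζ, rfl⟩ := annulusCover.surjective x₀
  obtain ⟨U, hUX, hζU, hU, hUre, V, hV, hUV⟩ := exists_isCompact_lift_piece hX hw hx₀
  have hXU : X ⊆ annulusCover '' U := by
    have hUc : IsClosed (annulusCover '' U) := (hU.image annulusCover.continuous).isClosed
    rcases isPreconnected_iff_subset_of_disjoint.mp hXc.isPreconnected V _ hV hUc.isOpen_compl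
      (fun x hx ↦ (em (x ∈ annulusCover '' U)).imp (fun h ↦ (hUV ▸ h).1) id)
      (by rw [← inter_assoc, inter_comm X, hUV, inter_compl_self]) with h | h
    · exact fun x hx ↦ hUV ▸ ⟨h hx, hx⟩
    · exact absurd (mem_image_of_mem _ hζU) (h hx₀)
  intro hsurj
  obtain ⟨_, hx, hx₂⟩ := hsurj.symm ▸ mem_univ (Circle.exp (ζ.re + π))
  obtain ⟨v, hv, rfl⟩ := hXU hx
  obtain ⟨m, hm⟩ := Circle.exp_eq_exp.mp hx₂
  have hodd : (1 : ℝ) ≤ |2 * (m : ℝ) + 1| := by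
    exact_mod_cast Int.one_le_abs (by omega : 2 * m + 1 ≠ 0)
  have hlt : |π * (2 * m + 1)| < 2 := by
    rw [show π * (2 * m + 1) = v.re - ζ.re by rw [hm]; ring]
    exact hUre v hv
  rw [abs_mul, abs_of_pos pi_pos] at hlt
  nlinarith [pi_gt_three]

abbrev DyadicSolenoid := {f : ℕ → Circle // ∀ i, f (i + 1) ^ 2 = f i}

namespace DyadicSolenoid

lemma pow_two_pow_apply_add (f : DyadicSolenoid) (n k : ℕ) : f.1 (n + k) ^ 2 ^ k = f.1 n := by
  induction k with
  | zero => simp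
  | succ k ih => rw [← add_assoc, pow_succ', pow_mul, f.2, ih]

lemma exists_apply_eq (n : ℕ) (z : Circle) : ∃ f : DyadicSolenoid, f.1 n = z := by
  refine ⟨⟨fun j ↦ Circle.exp (arg (z : ℂ) * 2 ^ n / 2 ^ j), fun j ↦ ?_⟩, ?_⟩
  · rw [sq, ← Circle.exp_add, pow_succ]
    congr 1
    field_simp
    ring
  · simp [Circle.exp_arg]

end DyadicSolenoid

/-- The map `Π_n`, with values in `ℝ × Circle`. -/
def annulusProj (n : ℕ) (m : Icc (1 : ℝ) 2 × DyadicSolenoid) : ℝ × Circle := ((m.1 : ℝ), m.2.1 n)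

lemma continuous_annulusProj (n : ℕ) : Continuous (annulusProj n) :=
  (continuous_subtype_val.comp continuous_fst).prodMk
    ((continuous_apply n).comp (continuous_subtype_val.comp continuous_snd))

section annulusProj

variable {M : Set (Icc (1 : ℝ) 2 × DyadicSolenoid)}

lemma snd_image_annulusProj_image (hM : Prod.snd '' M = univ) (n : ℕ) :
    Prod.snd '' (annulusProj n '' M) = univ := by
  refine eq_univ_of_forall fun z ↦ ?_
  obtain ⟨f, hf⟩ := DyadicSolenoid.exists_apply_eq n z
  obtain ⟨m, hm, rfl⟩ := hM.symm ▸ mem_univ f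
  exact ⟨_, mem_image_of_mem _ hm, hf⟩

/-- `z ↦ z ^ 2 ^ k` maps `Π_{n+k}(M)` into `Π_n(M)` and lifts to multiplying angles by `2 ^ k`. -/
lemma ConnectedWidthLE.annulusProj_add {W : ℝ} {n : ℕ}
    (h : ConnectedWidthLE (annulusCover ⁻¹' (annulusProj n '' M)) W) (k : ℕ) :
    ConnectedWidthLE (annulusCover ⁻¹' (annulusProj (n + k) '' M)) (W / 2 ^ k) := by
  set g : ℂ → ℂ := fun v ↦ (2 ^ k * v.re : ℝ) + v.im * I
  have hre : ∀ v, (g v).re = 2 ^ k * v.re := fun v ↦ by simp [g, -ofReal_mul, -ofReal_pow]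
  have him : ∀ v, (g v).im = v.im := fun v ↦ by simp [g, -ofReal_mul, -ofReal_pow]
  refine h.of_mapsTo (by positivity) (by fun_prop) hre ?_
  rintro v ⟨m, hm, hmv⟩
  refine ⟨m, hm, ?_⟩
  rw [annulusCover, hre, show (2 : ℝ) ^ k = (2 ^ k : ℕ) by push_cast; rfl,
    Circle.exp_natCast_mul]
  have h₁ : (m.1 : ℝ) = v.im := congrArg Prod.fst hmv
  have h₂ : m.2.1 (n + k) = Circle.exp v.re := congrArg Prod.snd hmv
  refine Prod.ext (h₁.trans (him v).symm) ?_
  change m.2.1 n = _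
  rw [← DyadicSolenoid.pow_two_pow_apply_add m.2 n k, h₂]

end annulusProj

theorem projections_essential_general
    (M : Set ((Set.Icc (1:ℝ) 2) × {f : ℕ → Circle // ∀ i, (f (i + 1)) ^ 2 = f i}))
    (hMcomp : IsCompact M) (hMconn : IsConnected M)
    (hproj₂ : Prod.snd '' M = Set.univ)
    (i : ℕ) :
    EssentialInAnnulus
      ((fun p : (Set.Icc (1:ℝ) 2) × {f : ℕ → Circle // ∀ i, (f (i + 1)) ^ 2 = f i} =>
        (p.1, p.2.1 i)) '' M) := by
  intro p q hp hq hpC hqC hpq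
  have hC : IsClosed ((fun m : Icc (1 : ℝ) 2 × DyadicSolenoid ↦ (m.1, m.2.1 i)) '' M) :=
    (hMcomp.image (continuous_fst.prodMk
      ((continuous_apply i).comp (continuous_subtype_val.comp continuous_snd)))).isClosed
  obtain ⟨N, ζ, hseg, hdown, hup⟩ :=
    exists_polyline_of_connectedComponentIn_eq hC hp hq hpC hqC hpq
  obtain ⟨W, hW⟩ := exists_connectedWidthLE_of_polyline ζ N hseg hdown hup
  replace hW : ConnectedWidthLE (annulusCover ⁻¹' (annulusProj i '' M)) W := by
    rwa [image_image] at hW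
  obtain ⟨k, hk⟩ := pow_unbounded_of_one_lt W one_lt_two
  have hnarrow : ConnectedWidthLE (annulusCover ⁻¹' (annulusProj (i + k) '' M)) 1 :=
    (ConnectedWidthLE.annulusProj_add hW k).mono ((div_le_one (by positivity)).mpr hk.le)
  exact snd_image_ne_univ_of_connectedWidthLE (hMcomp.image (continuous_annulusProj _))
    (hMconn.image _ (continuous_annulusProj _).continuousOn) hnarrow
    (snd_image_annulusProj_image hproj₂ _)

/-- If `M` is a subcontinuum of `[1,2] × S` (the product of an arc and the dyadic
solenoid) with full projections onto both factors, then each of its projections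
`Π_i(M)` to the annulus `[1,2] × Circle` is essential. -/
theorem projections_essential
    (M : Set ((Set.Icc (1:ℝ) 2) × {f : ℕ → Circle // ∀ i, (f (i + 1)) ^ 2 = f i}))
    (hMcomp : IsCompact M) (hMconn : IsConnected M)
    (hproj₁ : Prod.fst '' M = Set.univ)
    (hproj₂ : Prod.snd '' M = Set.univ)
    (i : ℕ) :
    EssentialInAnnulus
      ((fun p : (Set.Icc (1:ℝ) 2) × {f : ℕ → Circle // ∀ i, (f (i + 1)) ^ 2 = f i} =>
        (p.1, p.2.1 i)) '' M) :=
  projections_essential_general M hMcomp hMconn hproj₂ i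
end

section
/- Let C and D be compact connected subsets of the annulus [1,2] × Circle. Suppose C is essential, i.e. the boundary circles {1} × Circle and {2} × Circle lie in distinct connected components of ([1,2] × Circle) \ C, and suppose D intersects both boundary circles {1} × Circle and {2} × Circle. Then C ∩ D ≠ ∅. -/
/-- An essential subcontinuum of the annulus meets every subcontinuum joining
the two boundary circles. -/
theorem essential_meets_spanning
    (C D : Set ((Set.Icc (1:ℝ) 2) × Circle))
    (hCcomp : IsCompact C) (hCconn : IsConnected C)
    (hDcomp : IsCompact D) (hDconn : IsConnected D)
    (hCess : EssentialInAnnulus C)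
    (hD₁ : ∃ p ∈ D, (p.1 : ℝ) = 1)
    (hD₂ : ∃ p ∈ D, (p.1 : ℝ) = 2) :
    (C ∩ D).Nonempty := by
  by_contra h
  rw [Set.not_nonempty_iff_eq_empty] at h
  obtain ⟨p, hpD, hp1⟩ := hD₁
  obtain ⟨q, hqD, hq2⟩ := hD₂
  have hDsub : D ⊆ Cᶜ := fun x hx hxC =>
    Set.eq_empty_iff_forall_notMem.mp h x ⟨hxC, hx⟩
  have hsub := hDconn.isPreconnected.subset_connectedComponentIn hpD hDsub
  exact hCess p q hp1 hq2 (hDsub hpD) (hDsub hqD)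
    (connectedComponentIn_eq (hsub hqD))
end

section
/- Let M be a compact connected subset of the annulus [1,2] × Circle that is contained in a closed set D ⊆ [1,2] × Circle homeomorphic to the closed unit disk, and let τ : [1,2] × Circle → [1,2] × Circle be the covering map τ(r, z) = (r, z^2). Then every connected component C of τ^{-1}(M) is mapped by τ homeomorphically onto M. -/
/-!
A closed disk is contractible, so the map `D → Circle, (r, z) ↦ z` is nullhomotopic and,
lifting a contraction through the covering `Circle.exp : ℝ → Circle`, it has a continuous square
root `s`. Over `M ⊆ D` the preimage `τ⁻¹(M)` is then the union of the two sheets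
`{(r, s(r, z))}` and `{(r, -s(r, z))}`: they are disjoint, compact and connected (images of `M`),
so each is a connected component of `τ⁻¹(M)`, and `τ` restricted to it is inverse to the
corresponding section `M → τ⁻¹(M)`.
-/

open Set

theorem IsCoveringMap.exists_lift_of_homotopic_const {A E X : Type*} [TopologicalSpace A]
    [TopologicalSpace E] [TopologicalSpace X] {p : E → X} (cov : IsCoveringMap p)
    {f : C(A, X)} {e : E} (hf : f.Homotopic (.const A (p e))) :
    ∃ F : C(A, E), p ∘ F = f := by
  obtain ⟨H⟩ := hf.symm
  let F := cov.liftHomotopy H.toContinuousMap (.const A e) fun a ↦ by simp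
  refine ⟨⟨fun a ↦ F (1, a), by fun_prop⟩, funext fun a ↦ ?_⟩
  simpa using congr_fun (cov.liftHomotopy_lifts H.toContinuousMap _ _) (1, a)

theorem Circle.exists_sq_eq_of_nullhomotopic {A : Type*} [TopologicalSpace A]
    {f : C(A, Circle)} (hf : f.Nullhomotopic) :
    ∃ s : C(A, Circle), ∀ a, s a ^ 2 = f a := by
  obtain ⟨z, hz⟩ := hf
  obtain ⟨t, rfl⟩ := Circle.exp_surjective z
  obtain ⟨F, hF⟩ := Circle.isCoveringMap_exp.exists_lift_of_homotopic_const hz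
  refine ⟨⟨fun a ↦ Circle.exp (F a / 2), by fun_prop⟩, fun a ↦ ?_⟩
  rw [ContinuousMap.coe_mk, sq, ← Circle.exp_add, add_halves]
  exact congr_fun hF a

theorem Circle.sq_eq_sq_iff {z w : Circle} : z ^ 2 = w ^ 2 ↔ z = w ∨ z = -w := by
  simp only [← Circle.coe_inj, Circle.coe_pow, Circle.coe_neg, sq_eq_sq_iff_eq_or_eq_neg]

theorem connectedComponentIn_union_eq_left {X : Type*} [TopologicalSpace X] {R S : Set X}
    (hR : IsClosed R) (hS : IsClosed S) (hRS : Disjoint R S) (hRc : IsPreconnected R)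
    {p : X} (hp : p ∈ R) : connectedComponentIn (R ∪ S) p = R := by
  refine subset_antisymm ?_ (hRc.subset_connectedComponentIn hp subset_union_left)
  rcases isPreconnected_iff_subset_of_disjoint_closed.mp isPreconnected_connectedComponentIn
    R S hR hS (connectedComponentIn_subset _ _) (by simp [hRS.inter_eq]) with h | h
  · exact h
  · exact absurd (h (mem_connectedComponentIn (subset_union_left hp)))
      (disjoint_left.mp hRS hp)

theorem exists_homeomorph_of_eq_range_of_section {X Y : Type*} [TopologicalSpace X]
    [TopologicalSpace Y] {τ : X → Y} (hτ : Continuous τ) {M : Set Y} {g : M → X}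
    (hg : Continuous g) (hτg : ∀ m, τ (g m) = m) {C : Set X} (hC : C = range g) :
    ∃ e : C ≃ₜ M, ∀ x, (e x : Y) = τ x := by
  subst hC
  have hτ_mem : ∀ x : range g, τ x ∈ M := by
    rintro ⟨_, m, rfl⟩
    simp [hτg]
  refine ⟨{ toFun := fun x ↦ ⟨τ x, hτ_mem x⟩
            invFun := fun m ↦ ⟨g m, mem_range_self m⟩
            left_inv := ?_
            right_inv := fun m ↦ Subtype.ext (hτg m)
            continuous_toFun := by fun_prop
            continuous_invFun := by fun_prop }, fun _ ↦ rfl⟩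
  rintro ⟨_, m, rfl⟩
  simp only [hτg]

noncomputable def squareCover (Y : Type*) (p : Y × Circle) : Y × Circle := (p.1, p.2 ^ 2)

namespace squareCover

variable {Y : Type*} {M : Set (Y × Circle)} {s : M → Circle}

def IsSqrt (s : M → Circle) : Prop := ∀ m, s m ^ 2 = (m : Y × Circle).2

theorem IsSqrt.neg (hsq : IsSqrt s) : IsSqrt (-s) := fun m ↦ by
  rw [Pi.neg_apply, neg_sq, hsq]

def sheet (s : M → Circle) (m : M) : Y × Circle := ((m : Y × Circle).1, s m)

theorem apply_sheet (hsq : IsSqrt s) (m : M) : squareCover Y (sheet s m) = m :=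
  Prod.ext rfl (hsq m)

theorem preimage_eq_union (hsq : IsSqrt s) :
    squareCover Y ⁻¹' M = range (sheet s) ∪ range (sheet (-s)) := by
  refine subset_antisymm (fun x hx ↦ ?_) ?_
  · let m : M := ⟨squareCover Y x, hx⟩
    rcases Circle.sq_eq_sq_iff.mp (hsq m) with h | h
    · exact .inl ⟨m, Prod.ext rfl h⟩
    · exact .inr ⟨m, Prod.ext rfl (by simp [sheet, h])⟩
  · rintro _ (⟨m, rfl⟩ | ⟨m, rfl⟩)
    · simp [apply_sheet hsq]
    · simp [apply_sheet hsq.neg]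

theorem disjoint_range_sheet_neg (hsq : IsSqrt s) :
    Disjoint (range (sheet s)) (range (sheet (-s))) := by
  refine disjoint_left.mpr ?_
  rintro _ ⟨m, rfl⟩ ⟨m', hm'⟩
  have hmm' : m' = m := Subtype.ext <| by
    rw [← apply_sheet hsq.neg m', hm', apply_sheet hsq]
  subst hmm'
  exact Circle.neg_ne_self (s m') (congr_arg Prod.snd hm')

variable [TopologicalSpace Y]

theorem continuous : Continuous (squareCover Y) := by
  unfold squareCover; fun_prop

theorem continuous_sheet (hs : Continuous s) : Continuous (sheet s) := by
  unfold sheet; fun_prop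

theorem connectedComponentIn_preimage_eq_range_sheet [T2Space Y] (hM : IsCompact M)
    (hMc : IsPreconnected M) (hs : Continuous s) (hsq : IsSqrt s) {p : Y × Circle}
    (hp : p ∈ range (sheet s)) :
    connectedComponentIn (squareCover Y ⁻¹' M) p = range (sheet s) := by
  have : CompactSpace M := isCompact_iff_compactSpace.mp hM
  have : PreconnectedSpace M := Subtype.preconnectedSpace hMc
  rw [preimage_eq_union hsq]
  exact connectedComponentIn_union_eq_left (isCompact_range (continuous_sheet hs)).isClosed
    (isCompact_range (continuous_sheet hs.neg)).isClosed (disjoint_range_sheet_neg hsq)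
    (isPreconnected_range (continuous_sheet hs)) hp

end squareCover

open squareCover in
theorem components_of_preimage_homeomorphic_general
    (M D : Set ((Set.Icc (1:ℝ) 2) × Circle))
    (hMcomp : IsCompact M) (hMconn : IsConnected M)
    (hMD : M ⊆ D)
    (hDdisk : Nonempty (D ≃ₜ (Metric.closedBall (0:ℂ) 1)))
    (τ : (Set.Icc (1:ℝ) 2) × Circle → (Set.Icc (1:ℝ) 2) × Circle)
    (hτ : τ = fun p => (p.1, p.2 ^ 2)) :
    ∀ p ∈ τ ⁻¹' M,
      ∃ e : (connectedComponentIn (τ ⁻¹' M) p) ≃ₜ M,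
        ∀ x : connectedComponentIn (τ ⁻¹' M) p, (e x : (Set.Icc (1:ℝ) 2) × Circle) = τ x := by
  obtain ⟨h⟩ := hDdisk
  have : ContractibleSpace (Metric.closedBall (0:ℂ) 1) :=
    (convex_closedBall 0 1).contractibleSpace ⟨0, by simp⟩
  have : ContractibleSpace D := h.contractibleSpace
  obtain ⟨r, hr⟩ := Circle.exists_sq_eq_of_nullhomotopic <| (id_nullhomotopic D).comp_right
    ⟨fun d : D ↦ (d : Set.Icc (1:ℝ) 2 × Circle).2, by fun_prop⟩
  have hr_sq : IsSqrt fun m : M ↦ r (Set.inclusion hMD m) := fun m ↦ hr _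
  have hr_cont : Continuous fun m : M ↦ r (Set.inclusion hMD m) := by fun_prop
  have hτ : τ = squareCover _ := hτ
  subst hτ
  intro p hp
  obtain ⟨s, hs, hsq, hps⟩ :
      ∃ s : M → Circle, Continuous s ∧ IsSqrt s ∧ p ∈ range (sheet s) := by
    rcases preimage_eq_union hr_sq ▸ hp with hp | hp
    exacts [⟨_, hr_cont, hr_sq, hp⟩, ⟨_, hr_cont.neg, hr_sq.neg, hp⟩]
  exact exists_homeomorph_of_eq_range_of_section squareCover.continuous (continuous_sheet hs)
    (apply_sheet hsq) (connectedComponentIn_preimage_eq_range_sheet hMcomp hMconn.isPreconnected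
      hs hsq hps)

/-- If a compact connected subset `M` of the annulus `[1,2] × Circle` is
contained in a closed set `D` homeomorphic to the closed unit disk, then every
connected component of the preimage of `M` under the double covering
`τ(r, z) = (r, z²)` is mapped by `τ` homeomorphically onto `M`. -/
theorem components_of_preimage_homeomorphic
    (M D : Set ((Set.Icc (1:ℝ) 2) × Circle))
    (hMcomp : IsCompact M) (hMconn : IsConnected M)
    (hMD : M ⊆ D) (hDclosed : IsClosed D)
    (hDdisk : Nonempty (D ≃ₜ (Metric.closedBall (0:ℂ) 1)))
    (τ : (Set.Icc (1:ℝ) 2) × Circle → (Set.Icc (1:ℝ) 2) × Circle)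
    (hτ : τ = fun p => (p.1, p.2 ^ 2)) :
    ∀ p ∈ τ ⁻¹' M,
      ∃ e : (connectedComponentIn (τ ⁻¹' M) p) ≃ₜ M,
        ∀ x : connectedComponentIn (τ ⁻¹' M) p, (e x : (Set.Icc (1:ℝ) 2) × Circle) = τ x :=
  components_of_preimage_homeomorphic_general M D hMcomp hMconn hMD hDdisk τ hτ
end

section
/- Let X, X', Y, Y' be compact Hausdorff spaces, and let Γ : X → Y and Γ' : X' → Y' be continuous closed surjections each of whose point-fibers (preimages of singletons) are connected. Let M ⊆ X × X' be a compact connected set and let V ⊆ Y × Y' be an open connected set such that (Γ × Γ')(M) ⊆ V, where (Γ × Γ')(x, x') = (Γ(x), Γ'(x')). Then (Γ × Γ')^{-1}(V) is an open connected subset of X × X' containing M. -/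
open Set Function

/-- Key lemma: a continuous closed surjection with connected fibers pulls back
open connected sets to connected sets. -/
lemma monotone_preimage_connected {α β : Type*} [TopologicalSpace α] [TopologicalSpace β]
    {f : α → β} (hclosed : IsClosedMap f) (hsurj : Function.Surjective f)
    (hfib : ∀ y : β, IsConnected (f ⁻¹' {y}))
    {V : Set β} (hVopen : IsOpen V) (hVconn : IsConnected V) :
    IsConnected (f ⁻¹' V) := by
  obtain ⟨⟨y0, hy0⟩, hVpre⟩ := hVconn
  refine ⟨?_, ?_⟩
  · obtain ⟨x0, hx0⟩ := hsurj y0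
    exact ⟨x0, by simpa [hx0] using hy0⟩
  intro u v hu hv hcov hune hvne
  by_contra hempty
  push_neg at hempty
  -- each fiber over a point of V lies entirely in u or in v
  have hfibuv : ∀ y ∈ V, f ⁻¹' {y} ⊆ u ∨ f ⁻¹' {y} ⊆ v := by
    intro y hy
    have hsubV : f ⁻¹' {y} ⊆ f ⁻¹' V := fun x hx => by
      simp only [mem_preimage, mem_singleton_iff] at hx; simp [hx, hy]
    by_cases hcu : (f ⁻¹' {y} ∩ u).Nonempty
    · by_cases hcv : (f ⁻¹' {y} ∩ v).Nonempty
      · obtain ⟨x, hx⟩ := (hfib y).isPreconnected u v hu hv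
          (fun x hx => hcov (hsubV hx)) hcu hcv
        have : x ∈ f ⁻¹' V ∩ (u ∩ v) := ⟨hsubV hx.1, hx.2⟩
        rw [hempty] at this; exact this.elim
      · left
        intro x hx
        rcases hcov (hsubV hx) with h | h
        · exact h
        · exact absurd ⟨x, hx, h⟩ hcv
    · right
      intro x hx
      rcases hcov (hsubV hx) with h | h
      · exact absurd ⟨x, hx, h⟩ hcu
      · exact h
  -- the sets A, B
  set A : Set β := V \ f '' uᶜ with hA
  set B : Set β := V \ f '' vᶜ with hB
  have hAopen : IsOpen A := hVopen.sdiff (hclosed _ hu.isClosed_compl)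
  have hBopen : IsOpen B := hVopen.sdiff (hclosed _ hv.isClosed_compl)
  have hmemA : ∀ y ∈ V, f ⁻¹' {y} ⊆ u → y ∈ A := by
    intro y hy hsub
    refine ⟨hy, ?_⟩
    rintro ⟨x, hxu, rfl⟩
    exact hxu (hsub rfl)
  have hmemB : ∀ y ∈ V, f ⁻¹' {y} ⊆ v → y ∈ B := by
    intro y hy hsub
    refine ⟨hy, ?_⟩
    rintro ⟨x, hxv, rfl⟩
    exact hxv (hsub rfl)
  have hcovAB : V ⊆ A ∪ B := by
    intro y hy
    rcases hfibuv y hy with h | h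
    · exact Or.inl (hmemA y hy h)
    · exact Or.inr (hmemB y hy h)
  have hAne : (V ∩ A).Nonempty := by
    obtain ⟨x, hxV, hxu⟩ := hune
    have hyV : f x ∈ V := hxV
    rcases hfibuv _ hyV with h | h
    · exact ⟨f x, hyV, hmemA _ hyV h⟩
    · have : x ∈ f ⁻¹' V ∩ (u ∩ v) := ⟨hxV, hxu, h rfl⟩
      rw [hempty] at this; exact this.elim
  have hBne : (V ∩ B).Nonempty := by
    obtain ⟨x, hxV, hxv⟩ := hvne
    have hyV : f x ∈ V := hxV
    rcases hfibuv _ hyV with h | h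
    · have : x ∈ f ⁻¹' V ∩ (u ∩ v) := ⟨hxV, h rfl, hxv⟩
      rw [hempty] at this; exact this.elim
    · exact ⟨f x, hyV, hmemB _ hyV h⟩
  obtain ⟨y, hyV, hyA, hyB⟩ := hVpre A B hAopen hBopen hcovAB hAne hBne
  -- the fiber over y avoids both uᶜ and vᶜ, so it lies in u ∩ v, contradiction
  obtain ⟨x, hx⟩ := hsurj y
  have hxu : x ∈ u := by
    by_contra h
    exact hyA.2 ⟨x, h, hx⟩
  have hxv : x ∈ v := by
    by_contra h
    exact hyB.2 ⟨x, h, hx⟩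
  have : x ∈ f ⁻¹' V ∩ (u ∩ v) := ⟨by simp [hx, hyV], hxu, hxv⟩
  rw [hempty] at this; exact this.elim

/-- If `Γ : X → Y` and `Γ' : X' → Y'` are continuous closed monotone surjections
between compact Hausdorff spaces, `M ⊆ X × X'` is a subcontinuum, and
`V ⊆ Y × Y'` is an open connected set containing `(Γ × Γ')(M)`, then
`(Γ × Γ')⁻¹(V)` is an open connected subset of `X × X'` containing `M`. -/
theorem preimage_open_connected_of_monotone
    {X X' Y Y' : Type*}
    [TopologicalSpace X] [TopologicalSpace X'] [TopologicalSpace Y] [TopologicalSpace Y']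
    [CompactSpace X] [CompactSpace X'] [CompactSpace Y] [CompactSpace Y']
    [T2Space X] [T2Space X'] [T2Space Y] [T2Space Y']
    (Γ : X → Y) (Γ' : X' → Y')
    (hΓcont : Continuous Γ) (hΓ'cont : Continuous Γ')
    (hΓclosed : IsClosedMap Γ) (hΓ'closed : IsClosedMap Γ')
    (hΓsurj : Function.Surjective Γ) (hΓ'surj : Function.Surjective Γ')
    (hΓmono : ∀ y : Y, IsConnected (Γ ⁻¹' {y}))
    (hΓ'mono : ∀ y : Y', IsConnected (Γ' ⁻¹' {y}))
    (M : Set (X × X')) (hMcomp : IsCompact M) (hMconn : IsConnected M)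
    (V : Set (Y × Y')) (hVopen : IsOpen V) (hVconn : IsConnected V)
    (hMV : (fun p : X × X' => (Γ p.1, Γ' p.2)) '' M ⊆ V) :
    IsOpen ((fun p : X × X' => (Γ p.1, Γ' p.2)) ⁻¹' V) ∧
    IsConnected ((fun p : X × X' => (Γ p.1, Γ' p.2)) ⁻¹' V) ∧
    M ⊆ (fun p : X × X' => (Γ p.1, Γ' p.2)) ⁻¹' V := by
  set f : X × X' → Y × Y' := fun p => (Γ p.1, Γ' p.2) with hf
  have hfcont : Continuous f := (hΓcont.comp continuous_fst).prodMk (hΓ'cont.comp continuous_snd)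
  have hfclosed : IsClosedMap f := hfcont.isProperMap.isClosedMap
  have hfsurj : Function.Surjective f := by
    rintro ⟨y, y'⟩
    obtain ⟨x, hx⟩ := hΓsurj y
    obtain ⟨x', hx'⟩ := hΓ'surj y'
    exact ⟨(x, x'), by simp [hf, hx, hx']⟩
  have hffib : ∀ q : Y × Y', IsConnected (f ⁻¹' {q}) := by
    rintro ⟨y, y'⟩
    have : f ⁻¹' {(y, y')} = (Γ ⁻¹' {y}) ×ˢ (Γ' ⁻¹' {y'}) := by
      ext ⟨x, x'⟩
      simp [hf, Prod.ext_iff]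
    rw [this]
    exact (hΓmono y).prod (hΓ'mono y')
  exact ⟨hVopen.preimage hfcont,
    monotone_preimage_connected hfclosed hfsurj hffib hVopen hVconn,
    fun p hp => hMV ⟨p, hp, rfl⟩⟩
end
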